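/- arXiv:2207.08926 — 3 statements merged into one kernel-verified Lean document; each statement's English description precedes it below -/
import Mathlib

section
/- With the notation of the context, the tilted class 𝒟_υ^{≤0} is closed under cofibers and under extensions: for every distinguished triangle X → Y → Z → X[1] in 𝒟, if X ∈ 𝒟_υ^{≤0} and Y ∈ 𝒟_υ^{≤0} then Z ∈ 𝒟_υ^{≤0}, and if X ∈ 𝒟_υ^{≤0} and Z ∈ 𝒟_υ^{≤0} then Y ∈ 𝒟_υ^{≤0}. -/
open CategoryTheory CategoryTheory.Limits CategoryTheory.Pretriangulated

universe v u

variable (C : Type u) [Category.{v} C] [HasZeroObject C] [Preadditive C] [HasShift C ℤ]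
  [∀ n : ℤ, (shiftFunctor C n).Additive] [Pretriangulated C]

/-- A t-structure on a pretriangulated category `C`, given by the two isomorphism-closed
classes `le` (the objects of `𝒟^{≤0}`) and `ge` (the objects of `𝒟^{≥0}`).  With the
convention that `X ∈ 𝒟^{≤n} ↔ le (X⟦n⟧)` and `X ∈ 𝒟^{≥n} ↔ ge (X⟦n⟧)`, the axioms read:
`𝒟^{≤-1} ⊆ 𝒟^{≤0}` (equivalently `𝒟^{≤0}[1] ⊆ 𝒟^{≤0}`), `𝒟^{≥1} ⊆ 𝒟^{≥0}` (equivalently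
`𝒟^{≥0}[-1] ⊆ 𝒟^{≥0}`), `Hom(X, Y) = 0` for `X ∈ 𝒟^{≤0}` and `Y ∈ 𝒟^{≥1}`, and every
object sits in a distinguished triangle `A → X → B → A[1]` with `A ∈ 𝒟^{≤0}`,
`B ∈ 𝒟^{≥1}`. -/
structure TStruct where
  /-- the class `𝒟^{≤0}` -/
  le : C → Prop
  /-- the class `𝒟^{≥0}` -/
  ge : C → Prop
  le_iso_closed : ∀ {X Y : C}, (X ≅ Y) → le X → le Y
  ge_iso_closed : ∀ {X Y : C}, (X ≅ Y) → ge X → ge Y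
  le_shift : ∀ X : C, le X → le (X⟦(1 : ℤ)⟧)
  ge_shift : ∀ X : C, ge X → ge (X⟦(-1 : ℤ)⟧)
  hom_vanish : ∀ {X Y : C}, le X → ge (Y⟦(1 : ℤ)⟧) → ∀ f : X ⟶ Y, f = 0
  exists_triangle : ∀ X : C, ∃ (A B : C) (f : A ⟶ X) (g : X ⟶ B) (h : B ⟶ A⟦(1 : ℤ)⟧),
    (Triangle.mk f g h ∈ distTriang C) ∧ le A ∧ ge (B⟦(1 : ℤ)⟧)

variable {C}

/-- The heart `𝒟^♥ = 𝒟^{≤0} ∩ 𝒟^{≥0}` of a t-structure. -/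
def TStruct.heart (t : TStruct C) (X : C) : Prop := t.le X ∧ t.ge X

/-- A torsion pair `(𝒯, ℱ)` on the heart of a t-structure: two isomorphism-closed classes
of objects of the heart such that `Hom(T, F) = 0` for `T ∈ 𝒯`, `F ∈ ℱ`, and every object
of the heart sits in a distinguished triangle `T → X → F → T[1]` with `T ∈ 𝒯`, `F ∈ ℱ`
(i.e. a short exact sequence `0 → T → X → F → 0` in the heart). -/
structure HeartTorsionPair (t : TStruct C) where
  /-- the torsion class -/
  torsion : C → Prop
  /-- the torsion-free class -/
  free : C → Prop
  torsion_mem_heart : ∀ X : C, torsion X → t.heart X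
  free_mem_heart : ∀ X : C, free X → t.heart X
  torsion_iso_closed : ∀ {X Y : C}, (X ≅ Y) → torsion X → torsion Y
  free_iso_closed : ∀ {X Y : C}, (X ≅ Y) → free X → free Y
  hom_vanish : ∀ {T F : C}, torsion T → free F → ∀ f : T ⟶ F, f = 0
  exists_triangle : ∀ X : C, t.heart X →
    ∃ (T F : C) (f : T ⟶ X) (g : X ⟶ F) (h : F ⟶ T⟦(1 : ℤ)⟧),
      (Triangle.mk f g h ∈ distTriang C) ∧ torsion T ∧ free F

/-- The connective part `𝒟_υ^{≤0}` of the tilting of a t-structure `t` with respect to a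
torsion class `torsion` on its heart: those `X ∈ 𝒟^{≤0}` fitting in a distinguished
triangle `A → X → T → A[1]` with `A ∈ 𝒟^{≤-1}` and `T` torsion. -/
def TiltLE (t : TStruct C) (torsion : C → Prop) (X : C) : Prop :=
  t.le X ∧ ∃ (A T : C) (f : A ⟶ X) (g : X ⟶ T) (h : T ⟶ A⟦(1 : ℤ)⟧),
    (Triangle.mk f g h ∈ distTriang C) ∧ t.le (A⟦(-1 : ℤ)⟧) ∧ torsion T

/-- The coconnective part `𝒟_υ^{≥0}` of the tilting of a t-structure `t` with respect to a
torsion-free class `free` on its heart: those `X ∈ 𝒟^{≥-1}` fitting in a distinguished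
triangle `F[1] → X → B → F[2]` with `F` torsion-free and `B ∈ 𝒟^{≥0}`. -/
def TiltGE (t : TStruct C) (free : C → Prop) (X : C) : Prop :=
  t.ge (X⟦(-1 : ℤ)⟧) ∧ ∃ (F B : C) (f : F⟦(1 : ℤ)⟧ ⟶ X) (g : X ⟶ B)
    (h : B ⟶ (F⟦(1 : ℤ)⟧)⟦(1 : ℤ)⟧),
    (Triangle.mk f g h ∈ distTriang C) ∧ free F ∧ t.ge B

/-! The tilted aisle is the part of `𝒟^{≤0}` left orthogonal to `ℱ`: truncating `X ∈ 𝒟^{≤0}`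
as `A → X → B` with `A ∈ 𝒟^{≤-1}` puts `B` in the heart, and `Hom(X, ℱ) = 0` forces
`Hom(B, ℱ) = 0`, i.e. `B ∈ 𝒯`. Both `𝒟^{≤0}` and left orthogonality to `ℱ` pass to cofibers
and extensions by the long exact `Hom(-, W)` sequence; for cofibers one also needs
`Hom(X[1], ℱ) = 0`, which holds since `X ∈ 𝒟^{≤0}` and `ℱ ⊆ 𝒟^{≥0}`. -/

section Triangle

variable {X Y Z W : C} {f : X ⟶ Y} {g : Y ⟶ Z} {h : Z ⟶ X⟦(1 : ℤ)⟧}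

lemma hom₂_eq_zero_of_distTriang (hT : Triangle.mk f g h ∈ distTriang C)
    (hX : ∀ φ : X ⟶ W, φ = 0) (hZ : ∀ φ : Z ⟶ W, φ = 0) (φ : Y ⟶ W) : φ = 0 := by
  obtain ⟨ψ, rfl⟩ := Triangle.yoneda_exact₂ _ hT φ (hX _)
  rw [hZ ψ]
  exact comp_zero

lemma hom₃_eq_zero_of_distTriang (hT : Triangle.mk f g h ∈ distTriang C)
    (hY : ∀ φ : Y ⟶ W, φ = 0) (hX : ∀ φ : X⟦(1 : ℤ)⟧ ⟶ W, φ = 0) (φ : Z ⟶ W) : φ = 0 := by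
  obtain ⟨ψ, rfl⟩ := Triangle.yoneda_exact₃ _ hT φ (hY _)
  rw [hX ψ]
  exact comp_zero

lemma isIso₁_of_distTriang_of_mor₂_eq_zero (hT : Triangle.mk f g h ∈ distTriang C) (hg : g = 0)
    (hX : ∀ φ : X⟦(1 : ℤ)⟧ ⟶ Z, φ = 0) : IsIso f := by
  obtain ⟨ψ, hψ⟩ := Triangle.yoneda_exact₃ _ hT (𝟙 Z) (by rw [hg]; exact zero_comp)
  have hZ : IsZero Z := by
    rw [IsZero.iff_id_eq_zero, hψ, hX ψ]
    exact comp_zero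
  exact (Triangle.isZero₃_iff_isIso₁ _ hT).1 hZ

lemma distinguished_of_iso₂ (hT : Triangle.mk f g h ∈ distTriang C) {Y' : C} (e : Y ≅ Y') :
    Triangle.mk (f ≫ e.hom) (e.inv ≫ g) h ∈ distTriang C :=
  isomorphic_distinguished _ hT _ <| Triangle.isoMk _ _ (Iso.refl _) e.symm (Iso.refl _)
    (by simp [Triangle.mk]) (by simp [Triangle.mk]) (by simp [Triangle.mk])

end Triangle

namespace TStruct

variable (t : TStruct C)

lemma shift_hom_eq_zero {X Y : C} (hX : t.le X) (hY : t.ge Y) (φ : X⟦(1 : ℤ)⟧ ⟶ Y) :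
    φ = 0 := by
  apply (shiftFunctor C (-1 : ℤ)).map_injective
  rw [Functor.map_zero, ← cancel_epi (shiftShiftNeg X (1 : ℤ)).inv, comp_zero]
  exact t.hom_vanish hX (t.ge_iso_closed (shiftNegShift Y 1).symm hY) _

lemma le_of_shift_neg_one_le {X : C} (hX : t.le (X⟦(-1 : ℤ)⟧)) : t.le X :=
  t.le_iso_closed (shiftNegShift X 1) (t.le_shift _ hX)

lemma hom_eq_zero_of_shift_neg_one_le {X Y : C} (hX : t.le (X⟦(-1 : ℤ)⟧)) (hY : t.ge Y)
    (φ : X ⟶ Y) : φ = 0 := by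
  rw [← cancel_epi (shiftNegShift X (1 : ℤ)).hom, comp_zero]
  exact t.shift_hom_eq_zero hX hY _

lemma le_of_forall_hom_eq_zero {X : C} (hX : ∀ W : C, t.ge (W⟦(1 : ℤ)⟧) → ∀ φ : X ⟶ W, φ = 0) :
    t.le X := by
  obtain ⟨A, B, f, g, h, hT, hA, hB⟩ := t.exists_triangle X
  have := isIso₁_of_distTriang_of_mor₂_eq_zero hT (hX B hB g)
    (t.hom_vanish (t.le_shift A hA) hB)
  exact t.le_iso_closed (asIso f) hA

lemma le_cofiber {X Y Z : C} {f : X ⟶ Y} {g : Y ⟶ Z} {h : Z ⟶ X⟦(1 : ℤ)⟧}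
    (hT : Triangle.mk f g h ∈ distTriang C) (hX : t.le X) (hY : t.le Y) : t.le Z :=
  t.le_of_forall_hom_eq_zero fun _ hW ↦ hom₃_eq_zero_of_distTriang hT
    (t.hom_vanish hY hW) (t.hom_vanish (t.le_shift X hX) hW)

lemma le_extension {X Y Z : C} {f : X ⟶ Y} {g : Y ⟶ Z} {h : Z ⟶ X⟦(1 : ℤ)⟧}
    (hT : Triangle.mk f g h ∈ distTriang C) (hX : t.le X) (hZ : t.le Z) : t.le Y :=
  t.le_of_forall_hom_eq_zero fun _ hW ↦ hom₂_eq_zero_of_distTriang hT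
    (t.hom_vanish hX hW) (t.hom_vanish hZ hW)

lemma exists_distTriang_shift_neg_one_le_ge (X : C) :
    ∃ (A B : C) (f : A ⟶ X) (g : X ⟶ B) (h : B ⟶ A⟦(1 : ℤ)⟧),
      Triangle.mk f g h ∈ distTriang C ∧ t.le (A⟦(-1 : ℤ)⟧) ∧ t.ge B := by
  obtain ⟨A, B, f, g, h, hT, hA, hB⟩ := t.exists_triangle (X⟦(-1 : ℤ)⟧)
  exact ⟨_, _, _, _, _, distinguished_of_iso₂ (Triangle.shift_distinguished _ hT 1)
    (shiftNegShift X 1), t.le_iso_closed (shiftShiftNeg A 1).symm hA, hB⟩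

end TStruct

namespace HeartTorsionPair

variable {t : TStruct C} (tp : HeartTorsionPair t)

lemma torsion_of_forall_hom_eq_zero {X : C} (hX : t.heart X)
    (hXF : ∀ F : C, tp.free F → ∀ φ : X ⟶ F, φ = 0) : tp.torsion X := by
  obtain ⟨T, F, f, g, h, hT, hTor, hF⟩ := tp.exists_triangle X hX
  have := isIso₁_of_distTriang_of_mor₂_eq_zero hT (hXF F hF g)
    (t.shift_hom_eq_zero (tp.torsion_mem_heart T hTor).1 (tp.free_mem_heart F hF).2)
  exact tp.torsion_iso_closed (asIso f) hTor

end HeartTorsionPair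

lemma tiltLE_iff (t : TStruct C) (tp : HeartTorsionPair t) (X : C) :
    TiltLE t tp.torsion X ↔ t.le X ∧ ∀ F : C, tp.free F → ∀ φ : X ⟶ F, φ = 0 := by
  constructor
  · rintro ⟨hX, A, T, f, g, h, hT, hA, hTor⟩
    exact ⟨hX, fun F hF ↦ hom₂_eq_zero_of_distTriang hT
      (t.hom_eq_zero_of_shift_neg_one_le hA (tp.free_mem_heart F hF).2) (tp.hom_vanish hTor hF)⟩
  · rintro ⟨hX, hXF⟩
    obtain ⟨A, B, f, g, h, hT, hA, hB⟩ := t.exists_distTriang_shift_neg_one_le_ge X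
    have hA' := t.le_of_shift_neg_one_le hA
    refine ⟨hX, A, B, f, g, h, hT, hA, tp.torsion_of_forall_hom_eq_zero
      ⟨t.le_cofiber hT hA' hX, hB⟩ fun F hF ↦ ?_⟩
    exact hom₃_eq_zero_of_distTriang hT (hXF F hF)
      (t.shift_hom_eq_zero hA' (tp.free_mem_heart F hF).2)

/-- The tilted class `𝒟_υ^{≤0}` is closed under cofibers and extensions: for every
distinguished triangle `X → Y → Z → X[1]`, if `X, Y ∈ 𝒟_υ^{≤0}` then `Z ∈ 𝒟_υ^{≤0}`, and if
`X, Z ∈ 𝒟_υ^{≤0}` then `Y ∈ 𝒟_υ^{≤0}`. -/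
theorem tiltLE_closed_under_cofibers_and_extensions
    (t : TStruct C) (tp : HeartTorsionPair t)
    {X Y Z : C} (f : X ⟶ Y) (g : Y ⟶ Z) (h : Z ⟶ X⟦(1 : ℤ)⟧)
    (hT : Triangle.mk f g h ∈ distTriang C) :
    (TiltLE t tp.torsion X → TiltLE t tp.torsion Y → TiltLE t tp.torsion Z) ∧
    (TiltLE t tp.torsion X → TiltLE t tp.torsion Z → TiltLE t tp.torsion Y) := by
  simp only [tiltLE_iff t tp]
  refine ⟨fun ⟨hX, _⟩ ⟨hY, hYF⟩ ↦ ⟨t.le_cofiber hT hX hY, fun F hF ↦ ?_⟩,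
    fun ⟨hX, hXF⟩ ⟨hZ, hZF⟩ ↦ ⟨t.le_extension hT hX hZ, fun F hF ↦ ?_⟩⟩
  · exact hom₃_eq_zero_of_distTriang hT (hYF F hF)
      (t.shift_hom_eq_zero hX (tp.free_mem_heart F hF).2)
  · exact hom₂_eq_zero_of_distTriang hT (hXF F hF) (hZF F hF)
end

section
/- With the notation of the context, the pair (𝒟_υ^{≤0}, 𝒟_υ^{≥0}) is a t-structure on 𝒟 (the tilted t-structure τ_υ obtained from τ by tilting at the torsion pair (𝒯, ℱ)): the classes are isomorphism-closed, 𝒟_υ^{≤0}[1] ⊆ 𝒟_υ^{≤0}, 𝒟_υ^{≥0}[-1] ⊆ 𝒟_υ^{≥0}, Hom_𝒟(X, Y) = 0 whenever X ∈ 𝒟_υ^{≤0} and Y ∈ 𝒟_υ^{≥0}[-1], and every object X of 𝒟 fits into a distinguished triangle A → X → B → A[1] with A ∈ 𝒟_υ^{≤0} and B ∈ 𝒟_υ^{≥0}[-1]. -/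
open CategoryTheory CategoryTheory.Limits CategoryTheory.Pretriangulated

universe v u

variable (C : Type u) [Category.{v} C] [HasZeroObject C] [Preadditive C] [HasShift C ℤ]
  [∀ n : ℤ, (shiftFunctor C n).Additive] [Pretriangulated C]

variable {C}

/-! The tilted aisle `𝒟_υ^{≤0}` consists of extensions of torsion objects by `𝒟^{≤-1}`, so
the vanishing of maps into `𝒟_υ^{≥1}` is a chase along the defining triangles. For the
truncation triangle of `X`, cut `X` by `τ` into `A → X → Y` with `A ∈ 𝒟^{≤-1}`, `Y ∈ 𝒟^{≥0}`,
take the torsion part `T` of `H⁰(Y)`, and let `X'` be the fibre of the composite `T → Y → A[1]`.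
Then `X'` is an extension of `T` by `A`, hence in `𝒟_υ^{≤0}`, and it maps to `X`. On `𝒟_υ^{≤0}`,
`Hom(-, T) → Hom(-, Y)` is onto and `Hom(-, T[1]) → Hom(-, Y[1])` is injective, so a four-lemma
argument kills every map from `𝒟_υ^{≤0}` into the cone `B` of `X' → X`. That orthogonality alone
forces `B ∈ 𝒟^{≥0}` with `H⁰(B)` torsion-free, i.e. `B[1] ∈ 𝒟_υ^{≥0}`; no octahedron is needed.
-/

namespace CategoryTheory.Pretriangulated

lemma distinguished_of_iso_obj₂ {A X Y B : C} {f : A ⟶ X} {g : X ⟶ B} {h : B ⟶ A⟦(1 : ℤ)⟧}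
    (hT : Triangle.mk f g h ∈ distTriang C) (e : X ≅ Y) :
    Triangle.mk (f ≫ e.hom) (e.inv ≫ g) h ∈ distTriang C :=
  isomorphic_distinguished _ hT _ <|
    Triangle.isoMk _ _ (Iso.refl _) e.symm (Iso.refl _)
      (by simp [Triangle.mk]) (by simp [Triangle.mk]) (by simp [Triangle.mk])

lemma isIso_mor₁_of_mor₂_eq_zero {T : Triangle C} (hT : T ∈ distTriang C) (h₂ : T.mor₂ = 0)
    (h : ∀ g : T.obj₁⟦(1 : ℤ)⟧ ⟶ T.obj₃, g = 0) : IsIso T.mor₁ := by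
  refine (T.isZero₃_iff_isIso₁ hT).1 ?_
  obtain ⟨g, hg⟩ := T.yoneda_exact₃ hT (𝟙 _) (by rw [h₂, zero_comp])
  rw [IsZero.iff_id_eq_zero, hg, h g, comp_zero]

lemma isIso_mor₂_of_mor₁_eq_zero {T : Triangle C} (hT : T ∈ distTriang C) (h₁ : T.mor₁ = 0)
    (h : ∀ g : T.obj₁⟦(1 : ℤ)⟧ ⟶ T.obj₃, g = 0) : IsIso T.mor₂ := by
  refine (T.isZero₁_iff_isIso₂ hT).1 ?_
  obtain ⟨g, hg⟩ := T.coyoneda_exact₁ hT (𝟙 _) (by rw [h₁, Functor.map_zero, comp_zero])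
  have h₁₁ : IsZero (T.obj₁⟦(1 : ℤ)⟧) := by rw [IsZero.iff_id_eq_zero, hg, h g, zero_comp]
  exact ((shiftFunctor C (-1 : ℤ)).map_isZero h₁₁).of_iso (shiftShiftNeg _ 1).symm

section Fibre

variable {A X' T X Y Z : C} {u' : A ⟶ X'} {v' : X' ⟶ T} {u : A ⟶ X} {v : X ⟶ Y}
  {w : Y ⟶ A⟦(1 : ℤ)⟧} {ψ : T ⟶ Y} {φ : X' ⟶ X}

lemma exists_lift_of_fibre (h' : Triangle.mk u' v' (ψ ≫ w) ∈ distTriang C)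
    (h : Triangle.mk u v w ∈ distTriang C) (hu : u' ≫ φ = u) (hv : v' ≫ ψ = φ ≫ v)
    (hψ : ∀ g : Z ⟶ Y, ∃ τ : Z ⟶ T, g = τ ≫ ψ) (ξ : Z ⟶ X) : ∃ ζ : Z ⟶ X', ξ = ζ ≫ φ := by
  have hvw : v ≫ w = 0 := comp_distTriang_mor_zero₂₃ _ h
  obtain ⟨τ, hτ⟩ := hψ (ξ ≫ v)
  obtain ⟨ζ, rfl⟩ : ∃ ζ : Z ⟶ X', τ = ζ ≫ v' := Triangle.coyoneda_exact₃ _ h' τ <| by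
    change τ ≫ ψ ≫ w = 0
    rw [← Category.assoc, ← hτ, Category.assoc, hvw, comp_zero]
  obtain ⟨κ, hκ⟩ : ∃ κ : Z ⟶ A, ξ - ζ ≫ φ = κ ≫ u := Triangle.coyoneda_exact₂ _ h _ <| by
    change (ξ - ζ ≫ φ) ≫ v = 0
    rw [Preadditive.sub_comp, hτ, Category.assoc, Category.assoc, hv, sub_self]
  refine ⟨ζ + κ ≫ u', ?_⟩
  rw [Preadditive.add_comp, Category.assoc, hu, ← hκ, add_sub_cancel]

lemma eq_zero_of_comp_shift_fibre (h' : Triangle.mk u' v' (ψ ≫ w) ∈ distTriang C)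
    (h : Triangle.mk u v w ∈ distTriang C) (hu : u' ≫ φ = u) (hv : v' ≫ ψ = φ ≫ v)
    (hψ : ∀ g : Z ⟶ Y, ∃ τ : Z ⟶ T, g = τ ≫ ψ)
    (hψ₁ : ∀ g : Z ⟶ T⟦(1 : ℤ)⟧, g ≫ ψ⟦(1 : ℤ)⟧' = 0 → g = 0)
    (σ : Z ⟶ X'⟦(1 : ℤ)⟧) (hσ : σ ≫ φ⟦(1 : ℤ)⟧' = 0) : σ = 0 := by
  have hσv' : σ ≫ v'⟦(1 : ℤ)⟧' = 0 := hψ₁ _ <| by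
    rw [Category.assoc, ← Functor.map_comp, hv, Functor.map_comp, reassoc_of% hσ, zero_comp]
  obtain ⟨χ, hχ⟩ : ∃ χ : Z ⟶ A⟦(1 : ℤ)⟧, σ = χ ≫ (-u'⟦(1 : ℤ)⟧') :=
    Triangle.coyoneda_exact₃ _ (rot_of_distTriang _ (rot_of_distTriang _ h')) σ <| by
      change σ ≫ (-v'⟦(1 : ℤ)⟧') = 0
      rw [Preadditive.comp_neg, hσv', neg_zero]
  obtain ⟨ν, hν⟩ : ∃ ν : Z ⟶ Y, -χ = ν ≫ w := Triangle.coyoneda_exact₁ _ h (-χ) <| by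
    change (-χ) ≫ u⟦(1 : ℤ)⟧' = 0
    rw [← hu, Functor.map_comp, ← Category.assoc, Preadditive.neg_comp, ← Preadditive.comp_neg,
      ← hχ, hσ]
  obtain ⟨τ, rfl⟩ := hψ ν
  have hw : (ψ ≫ w) ≫ u'⟦(1 : ℤ)⟧' = 0 := comp_distTriang_mor_zero₃₁ _ h'
  calc σ = τ ≫ (ψ ≫ w) ≫ u'⟦(1 : ℤ)⟧' := by
        rw [hχ, Preadditive.comp_neg, ← Preadditive.neg_comp, hν]
        simp only [Category.assoc]
    _ = 0 := by rw [hw, comp_zero]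

lemma hom_eq_zero_of_cone {W : C} {g : X ⟶ W} {k : W ⟶ X'⟦(1 : ℤ)⟧}
    (hc : Triangle.mk φ g k ∈ distTriang C) (hlift : ∀ ξ : Z ⟶ X, ∃ ζ : Z ⟶ X', ξ = ζ ≫ φ)
    (hinj : ∀ σ : Z ⟶ X'⟦(1 : ℤ)⟧, σ ≫ φ⟦(1 : ℤ)⟧' = 0 → σ = 0) (ρ : Z ⟶ W) : ρ = 0 := by
  have hkφ : k ≫ φ⟦(1 : ℤ)⟧' = 0 := comp_distTriang_mor_zero₃₁ _ hc
  have hφg : φ ≫ g = 0 := comp_distTriang_mor_zero₁₂ _ hc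
  obtain ⟨ξ, rfl⟩ : ∃ ξ : Z ⟶ X, ρ = ξ ≫ g :=
    Triangle.coyoneda_exact₃ _ hc ρ (hinj (ρ ≫ k) (by rw [Category.assoc, hkφ, comp_zero]))
  obtain ⟨ζ, rfl⟩ := hlift ξ
  rw [Category.assoc, hφg, comp_zero]

end Fibre

end CategoryTheory.Pretriangulated

namespace TStruct

variable (t : TStruct C)

lemma le_of_le_shift {X : C} (h : t.le (X⟦(-1 : ℤ)⟧)) : t.le X :=
  t.le_iso_closed (shiftNegShift X 1) (t.le_shift _ h)

lemma ge_of_ge_shift {X : C} (h : t.ge (X⟦(1 : ℤ)⟧)) : t.ge X :=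
  t.ge_iso_closed (shiftShiftNeg X 1) (t.ge_shift _ h)

lemma hom_vanish_of_le_neg_one {X Y : C} (hX : t.le (X⟦(-1 : ℤ)⟧)) (hY : t.ge Y) (f : X ⟶ Y) :
    f = 0 :=
  (shiftFunctor C (-1 : ℤ)).map_injective <| by
    rw [Functor.map_zero]
    exact t.hom_vanish hX (t.ge_iso_closed (shiftNegShift Y 1).symm hY) _

lemma exists_triangle_neg_one (X : C) :
    ∃ (A B : C) (f : A ⟶ X) (g : X ⟶ B) (h : B ⟶ A⟦(1 : ℤ)⟧),
      (Triangle.mk f g h ∈ distTriang C) ∧ t.le (A⟦(-1 : ℤ)⟧) ∧ t.ge B := by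
  obtain ⟨A, B, f, g, h, hT, hA, hB⟩ := t.exists_triangle (X⟦(-1 : ℤ)⟧)
  exact ⟨_, _, _, _, _, distinguished_of_iso_obj₂ (Triangle.shift_distinguished _ hT 1)
    (shiftNegShift X 1), t.le_iso_closed (shiftShiftNeg A 1).symm hA, hB⟩

lemma le_of_hom_eq_zero {X : C} (hX : ∀ Y : C, t.ge (Y⟦(1 : ℤ)⟧) → ∀ f : X ⟶ Y, f = 0) :
    t.le X := by
  obtain ⟨A, B, f, g, h, hT, hA, hB⟩ := t.exists_triangle X
  have : IsIso f :=
    isIso_mor₁_of_mor₂_eq_zero hT (hX B hB g) (t.hom_vanish (t.le_shift A hA) hB)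
  exact t.le_iso_closed (asIso f) hA

lemma ge_of_hom_eq_zero {X : C} (hX : ∀ Y : C, t.le (Y⟦(-1 : ℤ)⟧) → ∀ f : Y ⟶ X, f = 0) :
    t.ge X := by
  obtain ⟨A, B, f, g, h, hT, hA, hB⟩ := t.exists_triangle_neg_one X
  have : IsIso g := isIso_mor₂_of_mor₁_eq_zero hT (hX A hA f)
    (t.hom_vanish_of_le_neg_one (t.le_iso_closed (shiftShiftNeg A 1).symm (t.le_of_le_shift hA)) hB)
  exact t.ge_iso_closed (asIso g).symm hB

lemma le_of_isZero {X : C} (hX : IsZero X) : t.le X :=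
  t.le_of_hom_eq_zero fun _ _ _ => hX.eq_of_src _ _

lemma ge_of_isZero {X : C} (hX : IsZero X) : t.ge X :=
  t.ge_of_hom_eq_zero fun _ _ _ => hX.eq_of_tgt _ _

lemma le₂ {T : Triangle C} (hT : T ∈ distTriang C) (h₁ : t.le T.obj₁) (h₃ : t.le T.obj₃) :
    t.le T.obj₂ :=
  t.le_of_hom_eq_zero fun _ hY f => by
    obtain ⟨g, rfl⟩ := Triangle.yoneda_exact₂ _ hT f (t.hom_vanish h₁ hY _)
    rw [t.hom_vanish h₃ hY g, comp_zero]

lemma ge₂ {T : Triangle C} (hT : T ∈ distTriang C) (h₁ : t.ge T.obj₁) (h₃ : t.ge T.obj₃) :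
    t.ge T.obj₂ :=
  t.ge_of_hom_eq_zero fun _ hY f => by
    obtain ⟨g, rfl⟩ := Triangle.coyoneda_exact₂ _ hT f (t.hom_vanish_of_le_neg_one hY h₃ _)
    rw [t.hom_vanish_of_le_neg_one hY h₁ g, zero_comp]

lemma heart_of_triangle {H Y B : C} {f : H ⟶ Y} {g : Y ⟶ B} {h : B ⟶ H⟦(1 : ℤ)⟧}
    (hT : Triangle.mk f g h ∈ distTriang C) (hH : t.le H) (hY : t.ge Y)
    (hB : t.ge (B⟦(1 : ℤ)⟧)) : t.heart H :=
  ⟨hH, t.ge₂ (inv_rot_of_distTriang _ hT) (t.ge_shift _ (t.ge_of_ge_shift hB)) hY⟩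

end TStruct

namespace HeartTorsionPair

open ZeroObject

variable {t : TStruct C} (tp : HeartTorsionPair t)

lemma hom_shift_vanish {T F : C} (hT : tp.torsion T) (hF : tp.free F) (f : T⟦(1 : ℤ)⟧ ⟶ F) :
    f = 0 :=
  t.hom_vanish_of_le_neg_one
    (t.le_iso_closed (shiftShiftNeg T 1).symm (tp.torsion_mem_heart T hT).1)
    (tp.free_mem_heart F hF).2 f

lemma torsion_of_hom_eq_zero {X : C} (hX : t.heart X)
    (h : ∀ F : C, tp.free F → ∀ f : X ⟶ F, f = 0) : tp.torsion X := by
  obtain ⟨T, F, f, g, k, hd, hT, hF⟩ := tp.exists_triangle X hX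
  have : IsIso f := isIso_mor₁_of_mor₂_eq_zero hd (h F hF g) (tp.hom_shift_vanish hT hF)
  exact tp.torsion_iso_closed (asIso f) hT

lemma free_of_hom_eq_zero {X : C} (hX : t.heart X)
    (h : ∀ T : C, tp.torsion T → ∀ f : T ⟶ X, f = 0) : tp.free X := by
  obtain ⟨T, F, f, g, k, hd, hT, hF⟩ := tp.exists_triangle X hX
  have : IsIso g := isIso_mor₂_of_mor₁_eq_zero hd (h T hT f) (tp.hom_shift_vanish hT hF)
  exact tp.free_iso_closed (asIso g).symm hF

lemma torsion_of_isZero {X : C} (hX : IsZero X) : tp.torsion X :=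
  tp.torsion_of_hom_eq_zero ⟨t.le_of_isZero hX, t.ge_of_isZero hX⟩ fun _ _ _ => hX.eq_of_src _ _

lemma free_of_isZero {X : C} (hX : IsZero X) : tp.free X :=
  tp.free_of_hom_eq_zero ⟨t.le_of_isZero hX, t.ge_of_isZero hX⟩ fun _ _ _ => hX.eq_of_tgt _ _

lemma tiltLE_of_iso {X Y : C} (e : X ≅ Y) (hX : TiltLE t tp.torsion X) :
    TiltLE t tp.torsion Y := by
  obtain ⟨hle, A, T, f, g, h, hd, hA, hT⟩ := hX
  exact ⟨t.le_iso_closed e hle, A, T, _, _, h, distinguished_of_iso_obj₂ hd e, hA, hT⟩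

lemma tiltGE_of_iso {X Y : C} (e : X ≅ Y) (hX : TiltGE t tp.free X) : TiltGE t tp.free Y := by
  obtain ⟨hge, F, B, f, g, h, hd, hF, hB⟩ := hX
  exact ⟨t.ge_iso_closed ((shiftFunctor C (-1 : ℤ)).mapIso e) hge, F, B, _, _, h,
    distinguished_of_iso_obj₂ hd e, hF, hB⟩

lemma tiltLE_of_torsion {T : C} (hT : tp.torsion T) : TiltLE t tp.torsion T :=
  ⟨(tp.torsion_mem_heart T hT).1, 0, T, 0, 𝟙 T, 0, contractible_distinguished₁ T,
    t.le_of_isZero ((shiftFunctor C (-1 : ℤ)).map_isZero (isZero_zero C)), hT⟩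

lemma tiltLE_of_le_shift {X : C} (hX : t.le (X⟦(-1 : ℤ)⟧)) : TiltLE t tp.torsion X :=
  ⟨t.le_of_le_shift hX, X, 0, 𝟙 X, 0, 0, contractible_distinguished X, hX,
    tp.torsion_of_isZero (isZero_zero C)⟩

lemma tiltGE_of_ge {X : C} (hX : t.ge X) : TiltGE t tp.free X :=
  ⟨t.ge_shift X hX, 0, X, 0, 𝟙 X, 0,
    (Triangle.distinguished_iff_of_isZero₁ _
      ((shiftFunctor C (1 : ℤ)).map_isZero (isZero_zero C))).2 (inferInstanceAs (IsIso (𝟙 X))),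
    tp.free_of_isZero (isZero_zero C), hX⟩

lemma tiltLE_shift {X : C} (hX : TiltLE t tp.torsion X) : TiltLE t tp.torsion (X⟦(1 : ℤ)⟧) :=
  tp.tiltLE_of_le_shift (t.le_iso_closed (shiftShiftNeg X 1).symm hX.1)

lemma tiltGE_shift {X : C} (hX : TiltGE t tp.free X) : TiltGE t tp.free (X⟦(-1 : ℤ)⟧) :=
  tp.tiltGE_of_ge hX.1

lemma hom_vanish_of_tiltLE_of_free {X F : C} (hX : TiltLE t tp.torsion X) (hF : tp.free F)
    (f : X ⟶ F) : f = 0 := by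
  obtain ⟨-, A, T, a, b, c, hd, hA, hT⟩ := hX
  obtain ⟨g, rfl⟩ : ∃ g : T ⟶ F, f = b ≫ g := Triangle.yoneda_exact₂ _ hd f
    (t.hom_vanish_of_le_neg_one hA (tp.free_mem_heart F hF).2 _)
  rw [tp.hom_vanish hT hF g, comp_zero]

lemma tilt_hom_vanish {X Y : C} (hX : TiltLE t tp.torsion X)
    (hY : TiltGE t tp.free (Y⟦(1 : ℤ)⟧)) (f : X ⟶ Y) : f = 0 := by
  obtain ⟨-, F, B, a, b, c, hd, hF, hB⟩ := hY
  apply (shiftFunctor C (1 : ℤ)).map_injective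
  obtain ⟨g, hg⟩ : ∃ g : X⟦(1 : ℤ)⟧ ⟶ F⟦(1 : ℤ)⟧, f⟦(1 : ℤ)⟧' = g ≫ a :=
    Triangle.coyoneda_exact₂ _ hd _
      (t.hom_vanish_of_le_neg_one (t.le_iso_closed (shiftShiftNeg X 1).symm hX.1) hB _)
  obtain ⟨g, rfl⟩ := (shiftFunctor C (1 : ℤ)).map_surjective g
  rw [hg, tp.hom_vanish_of_tiltLE_of_free hX hF g, Functor.map_zero, zero_comp, Functor.map_zero]

section TorsionPartOfTruncation

variable {Y H B T F Z : C} {ι : H ⟶ Y} {π : Y ⟶ B} {δ : B ⟶ H⟦(1 : ℤ)⟧} {i : T ⟶ H}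
  {s : H ⟶ F} {e : F ⟶ T⟦(1 : ℤ)⟧}

lemma exists_factor_torsion (hHYB : Triangle.mk ι π δ ∈ distTriang C) (hB : t.ge (B⟦(1 : ℤ)⟧))
    (hTHF : Triangle.mk i s e ∈ distTriang C) (hF : tp.free F) (hZ : TiltLE t tp.torsion Z)
    (g : Z ⟶ Y) : ∃ τ : Z ⟶ T, g = τ ≫ i ≫ ι := by
  obtain ⟨η, rfl⟩ : ∃ η : Z ⟶ H, g = η ≫ ι :=
    Triangle.coyoneda_exact₂ _ hHYB g (t.hom_vanish hZ.1 hB _)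
  obtain ⟨τ, rfl⟩ : ∃ τ : Z ⟶ T, η = τ ≫ i :=
    Triangle.coyoneda_exact₂ _ hTHF η (tp.hom_vanish_of_tiltLE_of_free hZ hF _)
  exact ⟨τ, Category.assoc _ _ _⟩

lemma eq_zero_of_comp_shift_torsion (hHYB : Triangle.mk ι π δ ∈ distTriang C)
    (hB : t.ge (B⟦(1 : ℤ)⟧)) (hTHF : Triangle.mk i s e ∈ distTriang C) (hF : tp.free F)
    (hZ : TiltLE t tp.torsion Z) (g : Z ⟶ T⟦(1 : ℤ)⟧) (hg : g ≫ (i ≫ ι)⟦(1 : ℤ)⟧' = 0) :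
    g = 0 := by
  have hgi : (g ≫ i⟦(1 : ℤ)⟧') ≫ ι⟦(1 : ℤ)⟧' = 0 := by
    rw [Category.assoc, ← Functor.map_comp, hg]
  obtain ⟨χ, hχ⟩ : ∃ χ : Z ⟶ B, g ≫ i⟦(1 : ℤ)⟧' = χ ≫ δ := Triangle.coyoneda_exact₁ _ hHYB _ hgi
  rw [t.hom_vanish hZ.1 hB χ, zero_comp] at hχ
  obtain ⟨χ', rfl⟩ : ∃ χ' : Z ⟶ F, g = χ' ≫ e := Triangle.coyoneda_exact₁ _ hTHF g hχ
  rw [tp.hom_vanish_of_tiltLE_of_free hZ hF χ', zero_comp]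

end TorsionPartOfTruncation

lemma tiltGE_shift_of_hom_eq_zero {X : C}
    (hX : ∀ Z : C, TiltLE t tp.torsion Z → ∀ f : Z ⟶ X, f = 0) :
    TiltGE t tp.free (X⟦(1 : ℤ)⟧) := by
  have hge : t.ge X := t.ge_of_hom_eq_zero fun Z hZ => hX Z (tp.tiltLE_of_le_shift hZ)
  obtain ⟨H, B, f, g, h, hd, hH, hB⟩ := t.exists_triangle X
  have hfree : tp.free H := tp.free_of_hom_eq_zero (t.heart_of_triangle hd hH hge hB)
    fun T hT a => by
      obtain ⟨b, rfl⟩ := Triangle.coyoneda_exact₂ _ (inv_rot_of_distTriang _ hd) a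
        (hX T (tp.tiltLE_of_torsion hT) _)
      rw [t.hom_vanish (tp.torsion_mem_heart T hT).1
        (t.ge_iso_closed (shiftNegShift B 1).symm (t.ge_of_ge_shift hB)) b]
      exact zero_comp
  exact ⟨t.ge_iso_closed (shiftShiftNeg X 1).symm hge, H, B⟦(1 : ℤ)⟧, _, _, _,
    Triangle.shift_distinguished _ hd 1, hfree, hB⟩

lemma exists_tilt_triangle (X : C) :
    ∃ (A B : C) (f : A ⟶ X) (g : X ⟶ B) (h : B ⟶ A⟦(1 : ℤ)⟧),
      (Triangle.mk f g h ∈ distTriang C) ∧ TiltLE t tp.torsion A ∧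
        TiltGE t tp.free (B⟦(1 : ℤ)⟧) := by
  obtain ⟨A, Y, a, x, d, hAXY, hA, hY⟩ := t.exists_triangle_neg_one X
  obtain ⟨H, B, ι, π, δ, hHYB, hH, hB⟩ := t.exists_triangle Y
  obtain ⟨T, F, i, s, e, hTHF, hT, hF⟩ := tp.exists_triangle H (t.heart_of_triangle hHYB hH hY hB)
  obtain ⟨X', ϑ, p, hAX'T⟩ := distinguished_cocone_triangle₂ ((i ≫ ι) ≫ d)
  obtain ⟨φ, hϑ, hp⟩ := complete_distinguished_triangle_morphism₂ _ _ hAX'T hAXY (𝟙 A) (i ≫ ι)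
    (by simp [Triangle.mk])
  obtain ⟨W, g, k, hX'XW⟩ := distinguished_cocone_triangle φ
  have hX' : TiltLE t tp.torsion X' :=
    ⟨t.le₂ hAX'T (t.le_of_le_shift hA) (tp.torsion_mem_heart T hT).1, A, T, ϑ, p, _, hAX'T, hA, hT⟩
  refine ⟨X', W, φ, g, k, hX'XW, hX', tp.tiltGE_shift_of_hom_eq_zero fun Z hZ => ?_⟩
  have hϑ' : ϑ ≫ φ = a := by simpa [Triangle.mk] using hϑ
  have hfactor := tp.exists_factor_torsion hHYB hB hTHF hF hZ
  exact hom_eq_zero_of_cone hX'XW (exists_lift_of_fibre hAX'T hAXY hϑ' hp hfactor)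
    (eq_zero_of_comp_shift_fibre hAX'T hAXY hϑ' hp hfactor
      (tp.eq_zero_of_comp_shift_torsion hHYB hB hTHF hF hZ))

end HeartTorsionPair

/-- The pair `(𝒟_υ^{≤0}, 𝒟_υ^{≥0})` obtained by tilting a t-structure `τ` at a torsion pair
`(𝒯, ℱ)` on its heart is again a t-structure: both classes are isomorphism-closed,
`𝒟_υ^{≤0}[1] ⊆ 𝒟_υ^{≤0}`, `𝒟_υ^{≥0}[-1] ⊆ 𝒟_υ^{≥0}`, `Hom(X, Y) = 0` whenever
`X ∈ 𝒟_υ^{≤0}` and `Y ∈ 𝒟_υ^{≥0}[-1]` (i.e. `Y⟦1⟧ ∈ 𝒟_υ^{≥0}`), and every object fits in a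
distinguished triangle `A → X → B → A[1]` with `A ∈ 𝒟_υ^{≤0}` and `B ∈ 𝒟_υ^{≥0}[-1]`. -/
theorem tilt_is_tStructure (t : TStruct C) (tp : HeartTorsionPair t) :
    (∀ {X Y : C}, (X ≅ Y) → TiltLE t tp.torsion X → TiltLE t tp.torsion Y) ∧
    (∀ {X Y : C}, (X ≅ Y) → TiltGE t tp.free X → TiltGE t tp.free Y) ∧
    (∀ X : C, TiltLE t tp.torsion X → TiltLE t tp.torsion (X⟦(1 : ℤ)⟧)) ∧
    (∀ X : C, TiltGE t tp.free X → TiltGE t tp.free (X⟦(-1 : ℤ)⟧)) ∧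
    (∀ {X Y : C}, TiltLE t tp.torsion X → TiltGE t tp.free (Y⟦(1 : ℤ)⟧) →
      ∀ f : X ⟶ Y, f = 0) ∧
    (∀ X : C, ∃ (A B : C) (f : A ⟶ X) (g : X ⟶ B) (h : B ⟶ A⟦(1 : ℤ)⟧),
      (Triangle.mk f g h ∈ distTriang C) ∧ TiltLE t tp.torsion A ∧
        TiltGE t tp.free (B⟦(1 : ℤ)⟧)) :=
  ⟨tp.tiltLE_of_iso, tp.tiltGE_of_iso, fun _ => tp.tiltLE_shift, fun _ => tp.tiltGE_shift,
    tp.tilt_hom_vanish, tp.exists_tilt_triangle⟩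
end

section
/- Let 𝒜 be an abelian category, let (𝒯, ℱ) be a torsion pair on 𝒜, and let r be an isomorphism-invariant function from the objects of 𝒜 to ℤ which is additive on short exact sequences, i.e. r(Y) = r(X) + r(Z) for every short exact sequence 0 → X → Y → Z → 0 in 𝒜. If 𝒯 = {X : r(X) = 0}, then 𝒯 is a Serre subcategory of 𝒜: for every short exact sequence 0 → X → Y → Z → 0 in 𝒜, one has Y ∈ 𝒯 if and only if both X ∈ 𝒯 and Z ∈ 𝒯. -/
open CategoryTheory CategoryTheory.Limits

universe v u

/-- A torsion pair on an abelian category. -/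
structure TorsionPair (C : Type u) [Category.{v} C] [Abelian C] where
  /-- the torsion class -/
  torsion : C → Prop
  /-- the torsion-free class -/
  free : C → Prop
  torsion_iso_closed : ∀ {X Y : C}, (X ≅ Y) → torsion X → torsion Y
  free_iso_closed : ∀ {X Y : C}, (X ≅ Y) → free X → free Y
  hom_vanish : ∀ {T F : C}, torsion T → free F → ∀ f : T ⟶ F, f = 0
  exists_ses : ∀ X : C, ∃ (T F : C) (i : T ⟶ X) (p : X ⟶ F) (w : i ≫ p = 0),
    (ShortComplex.mk i p w).ShortExact ∧ torsion T ∧ free F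

/-- The torsion class of a torsion pair is closed under quotients. -/
lemma TorsionPair.torsion_of_epi {C : Type u} [Category.{v} C] [Abelian C]
    (tp : TorsionPair C) {Y Z : C} (hY : tp.torsion Y) (p : Y ⟶ Z) [Epi p] :
    tp.torsion Z := by
  obtain ⟨T, F, i, q, w, hse, hT, hF⟩ := tp.exists_ses Z
  have hq : q = 0 := by
    have : p ≫ q = 0 := tp.hom_vanish hY hF (p ≫ q)
    exact (cancel_epi p).1 (by rw [this, comp_zero])
  have := hse.mono_f
  have := hse.exact.epi_f hq
  have : IsIso i := isIso_of_mono_of_epi i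
  exact tp.torsion_iso_closed (asIso i) hT

/-- If the torsion class of a torsion pair consists exactly of the objects of rank zero, for an
additive isomorphism-invariant rank function `r`, then it is a Serre subcategory. -/
theorem torsion_eq_rank_zero_is_serre
    {C : Type u} [Category.{v} C] [Abelian C] (tp : TorsionPair C)
    (r : C → ℤ)
    (hr_iso : ∀ {X Y : C}, (X ≅ Y) → r X = r Y)
    (hr_add : ∀ S : ShortComplex C, S.ShortExact → r S.X₂ = r S.X₁ + r S.X₃)
    (h_tor : ∀ X : C, tp.torsion X ↔ r X = 0)
    (S : ShortComplex C) (hS : S.ShortExact) :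
    tp.torsion S.X₂ ↔ (tp.torsion S.X₁ ∧ tp.torsion S.X₃) := by
  have hadd := hr_add S hS
  constructor
  · intro hY
    have := hS.epi_g
    have hZ : tp.torsion S.X₃ := tp.torsion_of_epi hY S.g
    have hX : r S.X₁ = 0 := by
      have h2 := (h_tor S.X₂).1 hY
      have h3 := (h_tor S.X₃).1 hZ
      omega
    exact ⟨(h_tor S.X₁).2 hX, hZ⟩
  · rintro ⟨hX, hZ⟩
    have h1 := (h_tor S.X₁).1 hX
    have h3 := (h_tor S.X₃).1 hZ
    exact (h_tor S.X₂).2 (by omega)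
end
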